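/- arXiv:1804.00059 — 2 statements merged into one kernel-verified Lean document; each statement's English description precedes it below -/
import Mathlib

section
/- Let f(z) = ωz + a₂z² + ⋯ ∈ G have compositional order n. Define f* = (1/n) Σ_{j=1}^{n} ω^{n-j} f⁽ʲ⁾ (coefficientwise sum of iterates scaled by powers of ω). Then f* belongs to G (its linear coefficient is nonzero) and f* ∘ f = ℓ_ω ∘ f*, where ℓ_ω(z) = ωz; consequently f* ∘ f ∘ (f*)⁻¹ = ℓ_ω. -/
open PowerSeries

/-- Composition (substitution) of formal power series: coefficient formula,
valid for `g` with zero constant term. -/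
noncomputable def PS.comp {F : Type*} [CommRing F] (f g : PowerSeries F) : PowerSeries F :=
  PowerSeries.mk fun k =>
    ∑ n ∈ Finset.range (k + 1), (PowerSeries.coeff n f) * (PowerSeries.coeff k (g ^ n))

/-- The group `G` of series with zero constant term and nonzero linear coefficient. -/
def PS.G (F : Type*) [CommRing F] : Set (PowerSeries F) :=
  {f | PowerSeries.constantCoeff f = 0 ∧ PowerSeries.coeff 1 f ≠ 0}

/-- `n`-fold compositional iterate of `f`. -/
noncomputable def PS.iter {F : Type*} [CommRing F] (f : PowerSeries F) : ℕ → PowerSeries F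
  | 0 => PowerSeries.X
  | n + 1 => PS.comp f (PS.iter f n)

/-- `f` has compositional order exactly `n`. -/
def PS.HasOrder {F : Type*} [CommRing F] (f : PowerSeries F) (n : ℕ) : Prop :=
  PS.iter f n = PowerSeries.X ∧ ∀ m, 0 < m → m < n → PS.iter f m ≠ PowerSeries.X

/-!
Composition `PS.comp f g` with `g(0) = 0` is Mathlib's substitution `PowerSeries.subst g f`, so
it is an algebra map in `f`, associative, and every series of `G` has a two-sided compositional
inverse (`PowerSeries.substInvOfIsUnit`). If `f⁽ⁿ⁾ = X` then `ωⁿ = 1` and `f⁽ⁿ⁺¹⁾ = f`, so the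
terms `ω^(n-j) f⁽ʲ⁺¹⁾` are periodic in `j` with period `n`. Composing
`Σ_{j<n} ω^(n-1-j) f⁽ʲ⁺¹⁾` with `f` on the right shifts `j` by one, which by periodicity is
multiplication by `ω`. Its linear coefficient is `Σ ωⁿ = n`, invertible in characteristic `0`.
-/

lemma Finset.sum_range_shift_of_eq {M : Type*} [AddCommMonoid M] {g : ℕ → M} {n : ℕ}
    (h : g n = g 0) : ∑ j ∈ Finset.range n, g (j + 1) = ∑ j ∈ Finset.range n, g j := by
  cases n with
  | zero => simp
  | succ m => rw [Finset.sum_range_succ, h, ← Finset.sum_range_succ']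

namespace PS

section Comp

variable {R : Type*} [CommRing R]

lemma coeff_pow_eq_zero_of_lt {g : R⟦X⟧} (hg : constantCoeff g = 0) {k d : ℕ} (hkd : k < d) :
    coeff k (g ^ d) = 0 := by
  obtain ⟨h, rfl⟩ := X_dvd_iff.mpr hg
  rw [mul_pow, coeff_X_pow_mul', if_neg (by omega)]

theorem comp_eq_subst (f : R⟦X⟧) {g : R⟦X⟧} (hg : constantCoeff g = 0) :
    PS.comp f g = subst g f := by
  ext k
  rw [coeff_subst' (HasSubst.of_constantCoeff_zero' hg),
    finsum_eq_sum_of_support_subset (s := Finset.range (k + 1))]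
  · simp only [PS.comp, coeff_mk, smul_eq_mul]
  · intro d hd
    rw [Finset.coe_range, Set.mem_Iio]
    by_contra! hkd
    exact hd (by simp only [coeff_pow_eq_zero_of_lt hg (by omega : k < d), smul_zero])

lemma constantCoeff_comp (f g : R⟦X⟧) : constantCoeff (PS.comp f g) = constantCoeff f := by
  simp [PS.comp, ← coeff_zero_eq_constantCoeff]

lemma coeff_one_comp (f g : R⟦X⟧) : coeff 1 (PS.comp f g) = coeff 1 f * coeff 1 g := by
  simp [PS.comp, Finset.sum_range_succ]

lemma comp_C_mul_X (c : R) {g : R⟦X⟧} (hg : constantCoeff g = 0) :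
    PS.comp (C c * X) g = c • g := by
  rw [comp_eq_subst _ hg, ← smul_eq_C_mul, subst_smul (HasSubst.of_constantCoeff_zero' hg),
    subst_X (HasSubst.of_constantCoeff_zero' hg)]

end Comp

section Iter

variable {R : Type*} [CommRing R] {f : R⟦X⟧}

lemma constantCoeff_iter (hf : constantCoeff f = 0) (m : ℕ) :
    constantCoeff (PS.iter f m) = 0 := by
  induction m with
  | zero => exact constantCoeff_X
  | succ m _ => rw [PS.iter, constantCoeff_comp, hf]

lemma coeff_one_iter (f : R⟦X⟧) (m : ℕ) : coeff 1 (PS.iter f m) = coeff 1 f ^ m := by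
  induction m with
  | zero => simp [PS.iter]
  | succ m ih => rw [PS.iter, coeff_one_comp, ih, pow_succ']

lemma iter_succ_eq_subst (hf : constantCoeff f = 0) (m : ℕ) :
    PS.iter f (m + 1) = subst f (PS.iter f m) := by
  have hfs := HasSubst.of_constantCoeff_zero' hf
  induction m with
  | zero =>
    show PS.comp f X = subst f X
    rw [comp_eq_subst f constantCoeff_X, subst_X hfs, X_subst]
  | succ m ih =>
    have hm := constantCoeff_iter hf m
    calc PS.iter f (m + 2) = subst (subst f (PS.iter f m)) f := by
          rw [PS.iter, comp_eq_subst _ (constantCoeff_iter hf _), ih]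
      _ = subst f (subst (PS.iter f m) f) :=
          (subst_comp_subst_apply (HasSubst.of_constantCoeff_zero' hm) hfs f).symm
      _ = subst f (PS.iter f (m + 1)) := by rw [PS.iter, comp_eq_subst _ hm]

lemma iter_add_one_eq_iter_one {n : ℕ} (hn : PS.iter f n = X) :
    PS.iter f (n + 1) = PS.iter f 1 := by
  rw [PS.iter, hn, PS.iter, PS.iter]

lemma coeff_one_pow_eq_one {n : ℕ} (hn : PS.iter f n = X) : coeff 1 f ^ n = 1 := by
  rw [← coeff_one_iter, hn, coeff_one_X]

end Iter

section TwistedIterSum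

variable {R : Type*} [CommRing R] {f : R⟦X⟧}

/-- The paper's `f*` is `n⁻¹ • twistedIterSum f n`. -/
noncomputable def twistedIterSum (f : R⟦X⟧) (n : ℕ) : R⟦X⟧ :=
  ∑ j ∈ Finset.range n, coeff 1 f ^ (n - 1 - j) • PS.iter f (j + 1)

lemma constantCoeff_twistedIterSum (hf : constantCoeff f = 0) (n : ℕ) :
    constantCoeff (twistedIterSum f n) = 0 := by
  simp [twistedIterSum, constantCoeff_iter hf]

lemma coeff_one_twistedIterSum (f : R⟦X⟧) (n : ℕ) :
    coeff 1 (twistedIterSum f n) = n * coeff 1 f ^ n := by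
  have hterm : ∀ j ∈ Finset.range n,
      coeff 1 (coeff 1 f ^ (n - 1 - j) • PS.iter f (j + 1)) = coeff 1 f ^ n := by
    intro j hj
    have := Finset.mem_range.mp hj
    rw [coeff_smul, coeff_one_iter, smul_eq_mul, ← pow_add]
    congr 1
    omega
  rw [twistedIterSum, map_sum, Finset.sum_congr rfl hterm, Finset.sum_const, Finset.card_range,
    nsmul_eq_mul]

theorem twistedIterSum_subst (hf : constantCoeff f = 0) {n : ℕ} (hn : PS.iter f n = X) :
    subst f (twistedIterSum f n) = coeff 1 f • twistedIterSum f n := by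
  have hfs := HasSubst.of_constantCoeff_zero' hf
  let g : ℕ → R⟦X⟧ := fun j => coeff 1 f ^ (n - j) • PS.iter f (j + 1)
  have hg : g n = g 0 := by
    simp only [g, Nat.sub_self, Nat.sub_zero, pow_zero, coeff_one_pow_eq_one hn, one_smul,
      iter_add_one_eq_iter_one hn]
  calc subst f (twistedIterSum f n) = ∑ j ∈ Finset.range n, g (j + 1) := by
        rw [twistedIterSum, ← coe_substAlgHom hfs, map_sum]
        refine Finset.sum_congr rfl fun j hj => ?_
        rw [coe_substAlgHom, subst_smul hfs, ← iter_succ_eq_subst hf]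
        congr 2
        omega
    _ = ∑ j ∈ Finset.range n, g j := Finset.sum_range_shift_of_eq hg
    _ = coeff 1 f • twistedIterSum f n := by
        rw [twistedIterSum, Finset.smul_sum]
        refine Finset.sum_congr rfl fun j hj => ?_
        have := Finset.mem_range.mp hj
        rw [smul_smul, ← pow_succ']
        show coeff 1 f ^ (n - j) • PS.iter f (j + 1) = _
        congr 2
        omega

end TwistedIterSum

lemma exists_comp_inverse {F : Type*} [Field F] {φ : F⟦X⟧} (hφ : φ ∈ PS.G F) :
    ∃ ψ ∈ PS.G F, PS.comp φ ψ = X ∧ PS.comp ψ φ = X := by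
  obtain ⟨hφ0, hφ1⟩ := hφ
  have hu : IsUnit (coeff 1 φ) := hφ1.isUnit
  have hψ0 := constantCoeff_substInvOfIsUnit φ hu
  refine ⟨φ.substInvOfIsUnit hu, ⟨hψ0, by simpa using hφ1⟩, ?_, ?_⟩
  · rw [comp_eq_subst _ hψ0, subst_substInvOfIsUnit_right _ hφ0]
  · rw [comp_eq_subst _ hφ0, subst_substInvOfIsUnit_left _ hφ0]

end PS

open PS in
theorem stmt_5 (F : Type*) [Field F] [CharZero F] (f : PowerSeries F) (hf : f ∈ PS.G F)
    (n : ℕ) (hn : 0 < n) (hord : PS.HasOrder f n)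
    (ω : F) (hω : PowerSeries.coeff 1 f = ω)
    (fstar : PowerSeries F)
    (hstar : fstar = (n : F)⁻¹ • ∑ j ∈ Finset.range n, ω ^ (n - 1 - j) • PS.iter f (j + 1)) :
    fstar ∈ PS.G F ∧
    PS.comp fstar f = PS.comp (PowerSeries.C ω * PowerSeries.X) fstar ∧
    ∃ finv ∈ PS.G F, PS.comp fstar finv = PowerSeries.X ∧
      PS.comp finv fstar = PowerSeries.X ∧
      PS.comp (PS.comp fstar f) finv = PowerSeries.C ω * PowerSeries.X := by
  subst hω
  replace hstar : fstar = (n : F)⁻¹ • twistedIterSum f n := hstar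
  have hf0 := hf.1
  have hstar0 : constantCoeff fstar = 0 := by
    simp [hstar, constantCoeff_twistedIterSum hf0]
  have hstar1 : coeff 1 fstar = 1 := by
    rw [hstar, coeff_smul, coeff_one_twistedIterSum, coeff_one_pow_eq_one hord.1, mul_one,
      smul_eq_mul, inv_mul_cancel₀ (Nat.cast_ne_zero.mpr hn.ne')]
  have hstarG : fstar ∈ PS.G F := ⟨hstar0, hstar1 ▸ one_ne_zero⟩
  have hconj : PS.comp fstar f = coeff 1 f • fstar := by
    rw [comp_eq_subst _ hf0, hstar, subst_smul (HasSubst.of_constantCoeff_zero' hf0),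
      twistedIterSum_subst hf0 hord.1, smul_comm]
  obtain ⟨finv, hfinvG, hright, hleft⟩ := exists_comp_inverse hstarG
  refine ⟨hstarG, by rw [hconj, comp_C_mul_X _ hstar0], finv, hfinvG, hright, hleft, ?_⟩
  rw [hconj, comp_eq_subst _ hfinvG.1, subst_smul (HasSubst.of_constantCoeff_zero' hfinvG.1),
    ← comp_eq_subst _ hfinvG.1, hright, smul_eq_C_mul]
end

section
/- Let ω be a primitive n-th root of unity in a field F of characteristic 0 and let f(z) = ωz + Σ_{k≥2} aₖzᵏ have compositional order n. Then for every k > 1 with k ≡ 1 (mod n), the coefficient aₖ is uniquely determined by the preceding coefficients: aₖ = −(ω/n)·P⁽ⁿ⁾ₖ(ω, a₂, …, a_{k−1}), where P⁽ⁿ⁾ₖ is the universal integer polynomial expressing the coefficient of zᵏ in f⁽ⁿ⁾ as aₖω^{n−1}n + P⁽ⁿ⁾ₖ(ω, a₂, …, a_{k−1}) when ω^{k−1} = 1. -/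
open PowerSeries

lemma pow_sub_one_eq_one_of_mod_eq {M : Type*} [Monoid M] {ω : M} {n k : ℕ} (hωn : ω ^ n = 1)
    (hk1 : 1 ≤ k) (hk : k % n = 1 % n) : ω ^ (k - 1) = 1 := by
  obtain ⟨c, hc⟩ := (Nat.modEq_iff_dvd' hk1).mp hk.symm
  rw [hc, pow_mul, hωn, one_pow]

lemma eq_neg_div_mul_of_mul_pow_pred_add_eq_zero {F : Type*} [Field F] {n : ℕ} {ω a p : F}
    (hωn : ω ^ n = 1) (hn : (n : F) ≠ 0) (h : a * ω ^ (n - 1) * n + p = 0) :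
    a = -(ω / n) * p := by
  have hn0 : n ≠ 0 := by rintro rfl; exact hn Nat.cast_zero
  have hinv : ω ^ (n - 1) * ω = 1 := by rw [← pow_succ, Nat.sub_add_cancel (by omega), hωn]
  field_simp
  linear_combination ω * h - a * n * hinv

theorem stmt_12 (F : Type*) [Field F] [CharZero F] (n : ℕ) (hn : 0 < n) (ω : F)
    (hω : IsPrimitiveRoot ω n) (f : PowerSeries F)
    (h0 : PowerSeries.constantCoeff f = 0) (h1 : PowerSeries.coeff 1 f = ω)
    (hord : PS.HasOrder f n) (k : ℕ) (hk1 : 1 < k) (hk : k % n = 1 % n)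
    (P : MvPolynomial (Fin k) ℤ)
    (hP : ∀ g : PowerSeries F, PowerSeries.constantCoeff g = 0 →
      (PowerSeries.coeff 1 g) ^ (k - 1) = 1 →
      PowerSeries.coeff k (PS.iter g n) =
        PowerSeries.coeff k g * (PowerSeries.coeff 1 g) ^ (n - 1) * (n : F) +
          MvPolynomial.aeval (fun i : Fin k => PowerSeries.coeff (i : ℕ) g) P) :
    PowerSeries.coeff k f =
      -(ω / (n : F)) * MvPolynomial.aeval (fun i : Fin k => PowerSeries.coeff (i : ℕ) f) P := by
  have hωk : (coeff 1 f) ^ (k - 1) = 1 :=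
    h1 ▸ pow_sub_one_eq_one_of_mod_eq hω.pow_eq_one hk1.le hk
  have key := hP f h0 hωk
  rw [hord.1, h1, coeff_X, if_neg hk1.ne'] at key
  exact eq_neg_div_mul_of_mul_pow_pred_add_eq_zero hω.pow_eq_one (Nat.cast_ne_zero.mpr hn.ne')
    key.symm
end
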